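/- Let 𝓡 be a reaction network on d species containing the reactions y*_1 → y*_2, y*_2 → y*_3, …, y*_{M−1} → y*_M, y*_M → y*_1. Suppose there exist u ∈ ℤ^d_{≥0} and m_0 ∈ {1,…,M} such that (1) I := {i : (u)_i ≠ 0} is a nonempty proper subset of {1,…,d}, and (2) for each m ∈ {1,…,M} and each complex y that is the source of some reaction in 𝓡 \ {y*_m → y*_{m+1}} and satisfies (y)_i ≤ (y*_m)_i for all i ∉ I, one has ⟨u, y⟩ < ⟨u, y*_m − y*_{m_0}⟩, where ⟨·,·⟩ is the standard inner product and y*_{M+1} = y*_1. Define {x_n}_{n≥1} by (x_n)_i = n^{(u)_i} + (y*_1)_i for i ∈ I and (x_n)_i = (y*_1)_i for i ∉ I. Then {x_n} is a tier sequence of 𝓡 and R = (y*_1 → y*_2, …, y*_M → y*_1) is a strong tier-1 cycle along {x_n}. -/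

import Mathlib

open Filter Finset

/-- A reaction network on `d` species: every reaction has a nonnegative source complex and
a nonnegative product complex, and the source differs from the product. -/
def IsRN (d : ℕ) (Rn : Finset ((Fin d → ℤ) × (Fin d → ℤ))) : Prop :=
  ∀ r ∈ Rn, (∀ i, 0 ≤ r.1 i) ∧ (∀ i, 0 ≤ r.2 i) ∧ r.1 ≠ r.2

/-- Mass-action intensity `λ_y(x) = ∏ i, x_i!/(x_i - y_i)!` if `x ≥ y` componentwise, else `0`. -/
def intensity (d : ℕ) (y x : Fin d → ℤ) : ℕ :=
  if ∀ i, y i ≤ x i then ∏ i : Fin d, Nat.descFactorial (x i).toNat ((y i).toNat) else 0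

/-- Cyclic successor on `{1, …, M}`: `cyc M m = m + 1` for `m < M` and `cyc M M = 1`. -/
def cyc (M m : ℕ) : ℕ := if m = M then 1 else m + 1

/-- `xshift d ystar x m n = x^m_n = x_n + ∑_{j=1}^{m-1} (y*_{j+1} - y*_j)`. -/
def xshift (d : ℕ) (ystar : ℕ → Fin d → ℤ) (x : ℕ → Fin d → ℤ) (m n : ℕ) : Fin d → ℤ :=
  fun i => x n i + ∑ j ∈ Finset.Ico 1 m, (ystar (j + 1) i - ystar j i)

/-- The ordered list `(y*_1 → y*_2, …, y*_M → y*_1)` consists of reactions of the network. -/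
def IsCycleIn (d : ℕ) (Rn : Finset ((Fin d → ℤ) × (Fin d → ℤ))) (M : ℕ)
    (ystar : ℕ → Fin d → ℤ) : Prop :=
  ∀ m, 1 ≤ m → m ≤ M → (ystar m, ystar (cyc M m)) ∈ Rn

/-- Condition (ii) of a strong tier-1 cycle, with explicit witness `m0`. -/
def TierLimits (d : ℕ) (Rn : Finset ((Fin d → ℤ) × (Fin d → ℤ))) (M : ℕ)
    (ystar : ℕ → Fin d → ℤ) (x : ℕ → Fin d → ℤ) (m0 : ℕ) : Prop :=
  ∀ m, 1 ≤ m → m ≤ M → ∀ y y' : Fin d → ℤ, (y, y') ∈ Rn →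
    (y, y') ≠ (ystar m, ystar (cyc M m)) →
    Tendsto (fun n =>
        ((intensity d (ystar m0) (xshift d ystar x m0 n) : ℝ) *
          (intensity d y (xshift d ystar x m n) : ℝ)) /
          (intensity d (ystar m) (xshift d ystar x m n) : ℝ))
      atTop (nhds 0)

/-- `R = (y*_1 → y*_2, …, y*_M → y*_1)` is a strong tier-1 cycle along `x`. -/
def IsStrongT1Cycle (d : ℕ) (Rn : Finset ((Fin d → ℤ) × (Fin d → ℤ))) (M : ℕ)
    (ystar : ℕ → Fin d → ℤ) (x : ℕ → Fin d → ℤ) : Prop :=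
  IsCycleIn d Rn M ystar ∧
  (∀ n, 0 < intensity d (ystar 1) (x n)) ∧
  ∃ m0, 1 ≤ m0 ∧ m0 ≤ M ∧ TierLimits d Rn M ystar x m0

/-- `y` is a source complex of the network. -/
def IsSourceIn (d : ℕ) (Rn : Finset ((Fin d → ℤ) × (Fin d → ℤ))) (y : Fin d → ℤ) : Prop :=
  ∃ y', (y, y') ∈ Rn

/-- `y` is a complex (source or product) of the network. -/
def ComplexOf (d : ℕ) (Rn : Finset ((Fin d → ℤ) × (Fin d → ℤ))) (y : Fin d → ℤ) : Prop :=
  ∃ r ∈ Rn, r.1 = y ∨ r.2 = y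

/-- Tier sequence of a reaction network. -/
def IsTierSeq (d : ℕ) (Rn : Finset ((Fin d → ℤ) × (Fin d → ℤ)))
    (x : ℕ → Fin d → ℤ) : Prop :=
  (∀ n i, 0 ≤ x n i) ∧
  (∃ i, Tendsto (fun n => x n i) atTop atTop) ∧
  (∀ i, (Tendsto (fun n => x n i) atTop atTop ∧ Monotone fun n => x n i) ∨
      (∃ c : ℤ, ∀ n, x n i = c)) ∧
  (∀ y y' : Fin d → ℤ, IsSourceIn d Rn y → IsSourceIn d Rn y' →
    (Tendsto (fun n => (intensity d y (x n) : ℝ) / (intensity d y' (x n) : ℝ)) atTop atTop ∨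
      ∃ c : ℝ, Tendsto (fun n => (intensity d y (x n) : ℝ) / (intensity d y' (x n) : ℝ))
        atTop (nhds c)))

/-- One reaction step: some reaction `y → y'` with `y ≤ a` fires, giving `b = a + y' - y`. -/
def ReactStep (d : ℕ) (Rn : Finset ((Fin d → ℤ) × (Fin d → ℤ)))
    (a b : Fin d → ℤ) : Prop :=
  ∃ r ∈ Rn, (∀ i, r.1 i ≤ a i) ∧ b = fun i => a i + (r.2 i - r.1 i)

/-- `w` is reachable from `z` by finitely many reaction steps. -/
def Reachable (d : ℕ) (Rn : Finset ((Fin d → ℤ) × (Fin d → ℤ)))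
    (z w : Fin d → ℤ) : Prop :=
  Relation.ReflTransGen (ReactStep d Rn) z w

/-- Weak reversibility: every reaction lies on a directed cycle of reactions. -/
def WeaklyReversible (d : ℕ) (Rn : Finset ((Fin d → ℤ) × (Fin d → ℤ))) : Prop :=
  ∀ r ∈ Rn, ∃ (K : ℕ) (ys : ℕ → Fin d → ℤ), 2 ≤ K ∧
    ys 1 = r.1 ∧ ys 2 = r.2 ∧
    (∀ j, 1 ≤ j → j < K → (ys j, ys (j + 1)) ∈ Rn) ∧
    (ys K, ys 1) ∈ Rn

/-!
Along `x_n` each coordinate in `I` grows like `n ^ u_i` while the others stay frozen at `y*_1`,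
and the shifted sequence `x^m_n` is the same sequence with `y*_1` replaced by `y*_m`. Hence
`λ_y(x^m_n)` either vanishes identically (when `y` exceeds `y*_m` in a frozen coordinate) or is
asymptotic to a positive constant times `n ^ ⟨u, y⟩`. Ratios of intensities therefore behave like
powers of `n`, which gives the tier-sequence property, and condition (2) says exactly that the
exponent `⟨u, y*_{m_0}⟩ + ⟨u, y⟩ - ⟨u, y*_m⟩` of the quotients in the strong tier-1 condition is
negative.
-/

open Topology

def GrowsLikePow (f : ℕ → ℝ) (E : ℕ) : Prop :=
  ∃ C > 0, Tendsto (fun n => f n / (n : ℝ) ^ E) atTop (𝓝 C)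

namespace GrowsLikePow

variable {f g : ℕ → ℝ} {a b : ℕ}

lemma const {c : ℝ} (hc : 0 < c) : GrowsLikePow (fun _ => c) 0 :=
  ⟨c, hc, by simp⟩

lemma mul (hf : GrowsLikePow f a) (hg : GrowsLikePow g b) :
    GrowsLikePow (fun n => f n * g n) (a + b) := by
  obtain ⟨A, hA, hfA⟩ := hf
  obtain ⟨B, hB, hgB⟩ := hg
  refine ⟨A * B, mul_pos hA hB, (hfA.mul hgB).congr fun n => ?_⟩
  rw [pow_add, mul_div_mul_comm]

lemma prod {ι : Type*} (s : Finset ι) {f : ι → ℕ → ℝ} {a : ι → ℕ}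
    (hf : ∀ i ∈ s, GrowsLikePow (f i) (a i)) :
    GrowsLikePow (fun n => ∏ i ∈ s, f i n) (∑ i ∈ s, a i) := by
  classical
  induction s using Finset.induction_on with
  | empty => simpa using const one_pos
  | insert i s hi ih =>
    simp only [prod_insert hi, sum_insert hi]
    exact (hf i (mem_insert_self i s)).mul (ih fun j hj => hf j (mem_insert_of_mem hj))

lemma sub_const (hf : GrowsLikePow f a) (ha : 1 ≤ a) (t : ℝ) :
    GrowsLikePow (fun n => f n - t) a := by
  obtain ⟨C, hC, hfC⟩ := hf
  have ht : Tendsto (fun n : ℕ => t / (n : ℝ) ^ a) atTop (𝓝 0) :=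
    tendsto_const_nhds.div_atTop
      ((tendsto_pow_atTop (by omega)).comp tendsto_natCast_atTop_atTop)
  exact ⟨C, hC, by simpa [sub_div] using hfC.sub ht⟩

lemma div_eventuallyEq (a b : ℕ) :
    (fun n => f n / g n) =ᶠ[atTop]
      fun n => f n / (n : ℝ) ^ a / (g n / (n : ℝ) ^ b) * ((n : ℝ) ^ a / (n : ℝ) ^ b) := by
  filter_upwards [eventually_ne_atTop 0] with n hn
  have hn' : (n : ℝ) ≠ 0 := Nat.cast_ne_zero.mpr hn
  rcases eq_or_ne (g n) 0 with hg | hg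
  · simp [hg]
  · field_simp

lemma tendsto_div_zero (hf : GrowsLikePow f a) (hg : GrowsLikePow g b) (hab : a < b) :
    Tendsto (fun n => f n / g n) atTop (𝓝 0) := by
  obtain ⟨A, -, hfA⟩ := hf
  obtain ⟨B, hB, hgB⟩ := hg
  have h := (hfA.div hgB hB.ne').mul
    ((tendsto_pow_div_pow_atTop_zero hab).comp tendsto_natCast_atTop_atTop)
  rw [mul_zero] at h
  exact h.congr' (div_eventuallyEq a b).symm

lemma tendsto_div_atTop_or_nhds (hf : GrowsLikePow f a) (hg : GrowsLikePow g b) :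
    Tendsto (fun n => f n / g n) atTop atTop ∨
      ∃ c, Tendsto (fun n => f n / g n) atTop (𝓝 c) := by
  rcases lt_trichotomy a b with hab | rfl | hab
  · exact Or.inr ⟨0, hf.tendsto_div_zero hg hab⟩
  all_goals
    obtain ⟨A, hA, hfA⟩ := hf
    obtain ⟨B, hB, hgB⟩ := hg
    have hAB := hfA.div hgB hB.ne'
  · have hone : (fun _ : ℕ => (1 : ℝ)) =ᶠ[atTop] fun n => (n : ℝ) ^ a / (n : ℝ) ^ a := by
      filter_upwards [eventually_ne_atTop 0] with n hn
      rw [div_self (pow_ne_zero a (Nat.cast_ne_zero.mpr hn))]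
    exact Or.inr ⟨A / B * 1,
      (hAB.mul (tendsto_const_nhds.congr' hone)).congr' (div_eventuallyEq a a).symm⟩
  · exact Or.inl <| (hAB.pos_mul_atTop (div_pos hA hB)
      ((tendsto_pow_div_pow_atTop_atTop hab).comp tendsto_natCast_atTop_atTop)).congr'
        (div_eventuallyEq a b).symm

end GrowsLikePow

lemma Nat.cast_descFactorial_eq_prod_range_sub {S : Type*} [CommRing S] (N j : ℕ) :
    (N.descFactorial j : S) = ∏ t ∈ range j, ((N : S) - t) := by
  induction j with
  | zero => simp
  | succ j ih =>
    rw [prod_range_succ, ← ih, Nat.descFactorial_succ]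
    rcases le_or_gt j N with h | h
    · push_cast [h]
      ring
    · simp [Nat.descFactorial_eq_zero_iff_lt.mpr h]

lemma GrowsLikePow.descFactorial {N : ℕ → ℕ} {k : ℕ} (hN : GrowsLikePow (fun n => (N n : ℝ)) k)
    (hk : 1 ≤ k) (j : ℕ) : GrowsLikePow (fun n => ((N n).descFactorial j : ℝ)) (j * k) := by
  simp only [Nat.cast_descFactorial_eq_prod_range_sub]
  simpa using GrowsLikePow.prod (range j) fun t _ => hN.sub_const hk t

lemma growsLikePow_add_one_pow_add_const {k : ℕ} (hk : 1 ≤ k) (c : ℝ) :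
    GrowsLikePow (fun n => ((n : ℝ) + 1) ^ k + c) k := by
  have hpow : GrowsLikePow (fun n => ((n : ℝ) + 1) ^ k) k := by
    have h := ((tendsto_const_nhds (x := (1 : ℝ))).add
      tendsto_one_div_atTop_nhds_zero_nat).pow k
    rw [add_zero, one_pow] at h
    refine ⟨1, one_pos, h.congr' ?_⟩
    filter_upwards [eventually_ne_atTop 0] with n hn
    have hn' : (n : ℝ) ≠ 0 := Nat.cast_ne_zero.mpr hn
    rw [← div_pow]
    field_simp
  simpa using hpow.sub_const hk (-c)

section ReactionNetwork

variable {d : ℕ}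

lemma intensity_eq_prod_descFactorial {y x : Fin d → ℤ} (hx : ∀ i, 0 ≤ x i) :
    intensity d y x = ∏ i, (x i).toNat.descFactorial (y i).toNat := by
  rw [intensity]
  split_ifs with h
  · rfl
  · push Not at h
    obtain ⟨i, hi⟩ := h
    have := hx i
    exact (prod_eq_zero (mem_univ i) (Nat.descFactorial_eq_zero_iff_lt.mpr (by omega))).symm

lemma intensity_pos {y x : Fin d → ℤ} (h : ∀ i, y i ≤ x i) : 0 < intensity d y x := by
  rw [intensity, if_pos h]
  exact prod_pos fun i _ => Nat.descFactorial_pos.mpr (Int.toNat_le_toNat (h i))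

/-- The sequence `x_n` of the statement is `tierSeq u (y*_1)`; the base point `v` is a parameter
because the shifted sequences `x^m_n` are `tierSeq u (y*_m)`. -/
def tierSeq (u v : Fin d → ℤ) (n : ℕ) : Fin d → ℤ :=
  fun i => if u i ≠ 0 then ((n : ℤ) + 1) ^ (u i).toNat + v i else v i

variable {u v : Fin d → ℤ}

lemma le_tierSeq (n : ℕ) (i : Fin d) : v i ≤ tierSeq u v n i := by
  unfold tierSeq
  split_ifs
  · have : (0 : ℤ) ≤ ((n : ℤ) + 1) ^ (u i).toNat := by positivity
    omega
  · rfl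

lemma tierSeq_nonneg (hv : ∀ i, 0 ≤ v i) (n : ℕ) (i : Fin d) : 0 ≤ tierSeq u v n i :=
  (hv i).trans (le_tierSeq n i)

lemma monotone_tierSeq (i : Fin d) : Monotone fun n => tierSeq u v n i := by
  intro a b hab
  simp only [tierSeq]
  split_ifs
  · gcongr
  · rfl

lemma tendsto_tierSeq_atTop {i : Fin d} (hu : 0 ≤ u i) (h : u i ≠ 0) :
    Tendsto (fun n => tierSeq u v n i) atTop atTop := by
  have hsucc : Tendsto (fun n : ℕ => (n : ℤ) + 1) atTop atTop :=
    tendsto_atTop_add_const_right _ _ tendsto_natCast_atTop_atTop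
  simpa [tierSeq, h] using tendsto_atTop_add_const_right _ (v i)
    ((tendsto_pow_atTop (by omega)).comp hsucc)

lemma xshift_tierSeq {ystar : ℕ → Fin d → ℤ} {m : ℕ} (hm : 1 ≤ m) (n : ℕ) :
    xshift d ystar (tierSeq u (ystar 1)) m n = tierSeq u (ystar m) n := by
  funext i
  have htel : ∑ j ∈ Ico 1 m, (ystar (j + 1) i - ystar j i) = ystar m i - ystar 1 i :=
    sum_Ico_sub (fun j => ystar j i) hm
  simp only [xshift, tierSeq, htel]
  split_ifs <;> ring

lemma intensity_tierSeq_eq_zero {y : Fin d → ℤ} {i : Fin d} (h0 : u i = 0) (hlt : v i < y i)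
    (n : ℕ) : intensity d y (tierSeq u v n) = 0 := by
  rw [intensity, if_neg]
  push Not
  exact ⟨i, by simpa [tierSeq, h0] using hlt⟩

lemma growsLikePow_intensity_tierSeq (hu : ∀ i, 0 ≤ u i) (hv : ∀ i, 0 ≤ v i) {y : Fin d → ℤ}
    (hyv : ∀ i, u i = 0 → y i ≤ v i) :
    GrowsLikePow (fun n => (intensity d y (tierSeq u v n) : ℝ))
      (∑ i, (y i).toNat * (u i).toNat) := by
  simp only [intensity_eq_prod_descFactorial (tierSeq_nonneg hv _), Nat.cast_prod]
  refine GrowsLikePow.prod univ fun i _ => ?_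
  by_cases h : u i = 0
  · simp only [tierSeq, h, ne_eq, not_true_eq_false, if_false, Int.toNat_zero, mul_zero]
    exact GrowsLikePow.const
      (by exact_mod_cast Nat.descFactorial_pos.mpr (Int.toNat_le_toNat (hyv i h)))
  · have hk : 1 ≤ (u i).toNat := by have := hu i; omega
    refine GrowsLikePow.descFactorial ?_ hk _
    have hcast : ∀ n, ((tierSeq u v n i).toNat : ℝ) = ((n : ℝ) + 1) ^ (u i).toNat + v i := by
      intro n
      rw [← Int.cast_natCast, Int.toNat_of_nonneg (tierSeq_nonneg hv n i)]
      simp [tierSeq, h]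
    simpa only [hcast] using growsLikePow_add_one_pow_add_const hk (v i : ℝ)

lemma natCast_sum_toNat_mul_toNat (hu : ∀ i, 0 ≤ u i) {y : Fin d → ℤ} (hy : ∀ i, 0 ≤ y i) :
    ((∑ i, (y i).toNat * (u i).toNat : ℕ) : ℤ) = ∑ i, u i * y i := by
  push_cast
  exact sum_congr rfl fun i _ => by
    rw [Int.toNat_of_nonneg (hu i), Int.toNat_of_nonneg (hy i), mul_comm]

lemma tendsto_intensity_tierSeq_div (hu : ∀ i, 0 ≤ u i) (hv : ∀ i, 0 ≤ v i) (y y' : Fin d → ℤ) :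
    let ratio := fun n => (intensity d y (tierSeq u v n) : ℝ) / intensity d y' (tierSeq u v n)
    Tendsto ratio atTop atTop ∨ ∃ c, Tendsto ratio atTop (𝓝 c) := by
  intro ratio
  by_cases hy' : ∀ i, u i = 0 → y' i ≤ v i
  · by_cases hy : ∀ i, u i = 0 → y i ≤ v i
    · exact (growsLikePow_intensity_tierSeq hu hv hy).tendsto_div_atTop_or_nhds
        (growsLikePow_intensity_tierSeq hu hv hy')
    · push Not at hy
      obtain ⟨i, h0, hlt⟩ := hy
      refine Or.inr ⟨0, ?_⟩
      simp only [ratio, intensity_tierSeq_eq_zero h0 hlt, Nat.cast_zero, zero_div]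
      exact tendsto_const_nhds
  -- `λ_{y'}` vanishes identically, so the quotient is the junk value `x / 0 = 0`
  · push Not at hy'
    obtain ⟨i, h0, hlt⟩ := hy'
    refine Or.inr ⟨0, ?_⟩
    simp only [ratio, intensity_tierSeq_eq_zero h0 hlt, Nat.cast_zero, div_zero]
    exact tendsto_const_nhds

lemma isTierSeq_tierSeq (Rn : Finset ((Fin d → ℤ) × (Fin d → ℤ))) (hu : ∀ i, 0 ≤ u i)
    (hu0 : ∃ i, u i ≠ 0) (hv : ∀ i, 0 ≤ v i) : IsTierSeq d Rn (tierSeq u v) := by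
  refine ⟨fun n i => tierSeq_nonneg hv n i, ?_, fun i => ?_,
    fun y y' _ _ => tendsto_intensity_tierSeq_div hu hv y y'⟩
  · obtain ⟨i, hi⟩ := hu0
    exact ⟨i, tendsto_tierSeq_atTop (hu i) hi⟩
  · by_cases h : u i = 0
    · exact Or.inr ⟨v i, fun n => by simp [tierSeq, h]⟩
    · exact Or.inl ⟨tendsto_tierSeq_atTop (hu i) h, monotone_tierSeq i⟩

lemma tierLimits_tierSeq {Rn : Finset ((Fin d → ℤ) × (Fin d → ℤ))} (hRn : IsRN d Rn)
    {M : ℕ} {ystar : ℕ → Fin d → ℤ} (hmem : IsCycleIn d Rn M ystar) (hu : ∀ i, 0 ≤ u i)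
    {m0 : ℕ} (hm01 : 1 ≤ m0) (hm0M : m0 ≤ M)
    (hcond : ∀ m, 1 ≤ m → m ≤ M → ∀ y y' : Fin d → ℤ, (y, y') ∈ Rn →
      (y, y') ≠ (ystar m, ystar (cyc M m)) →
      (∀ i, u i = 0 → y i ≤ ystar m i) →
      (∑ i, u i * y i) < ∑ i, u i * (ystar m i - ystar m0 i)) :
    TierLimits d Rn M ystar (tierSeq u (ystar 1)) m0 := by
  intro m hm1 hmM y y' hyy' hne
  have hsrc : ∀ k, 1 ≤ k → k ≤ M → ∀ i, 0 ≤ ystar k i := fun k h1 h2 => (hRn _ (hmem k h1 h2)).1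
  simp only [xshift_tierSeq hm1, xshift_tierSeq hm01]
  by_cases hyv : ∀ i, u i = 0 → y i ≤ ystar m i
  · have hE : (∑ i, (ystar m0 i).toNat * (u i).toNat) + (∑ i, (y i).toNat * (u i).toNat)
        < ∑ i, (ystar m i).toNat * (u i).toNat := by
      have key := hcond m hm1 hmM y y' hyy' hne hyv
      simp only [mul_sub, sum_sub_distrib] at key
      have c0 := natCast_sum_toNat_mul_toNat hu (hsrc m0 hm01 hm0M)
      have cy := natCast_sum_toNat_mul_toNat hu (y := y) (hRn _ hyy').1
      have cm := natCast_sum_toNat_mul_toNat hu (hsrc m hm1 hmM)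
      omega
    have grows := fun {k} (hk1 : 1 ≤ k) (hkM : k ≤ M) =>
      growsLikePow_intensity_tierSeq hu (hsrc k hk1 hkM) (y := ystar k) fun _ _ => le_rfl
    exact ((grows hm01 hm0M).mul (growsLikePow_intensity_tierSeq hu (hsrc m hm1 hmM) hyv))
      |>.tendsto_div_zero (grows hm1 hmM) hE
  · push Not at hyv
    obtain ⟨i, h0, hlt⟩ := hyv
    simp only [intensity_tierSeq_eq_zero h0 hlt, Nat.cast_zero, mul_zero, zero_div]
    exact tendsto_const_nhds

end ReactionNetwork

theorem stmt5_general {d M : ℕ} (hM : 1 ≤ M)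
    (Rn : Finset ((Fin d → ℤ) × (Fin d → ℤ))) (hRn : IsRN d Rn)
    (ystar : ℕ → Fin d → ℤ) (hmem : IsCycleIn d Rn M ystar)
    (u : Fin d → ℤ) (hu : ∀ i, 0 ≤ u i)
    (m0 : ℕ) (hm01 : 1 ≤ m0) (hm0M : m0 ≤ M)
    (hI1 : ∃ i, u i ≠ 0)
    (hcond : ∀ m, 1 ≤ m → m ≤ M → ∀ y y' : Fin d → ℤ, (y, y') ∈ Rn →
      (y, y') ≠ (ystar m, ystar (cyc M m)) →
      (∀ i, u i = 0 → y i ≤ ystar m i) →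
      (∑ i, u i * y i) < ∑ i, u i * (ystar m i - ystar m0 i)) :
    IsTierSeq d Rn
      (fun n i => if u i ≠ 0 then ((n : ℤ) + 1) ^ (u i).toNat + ystar 1 i else ystar 1 i) ∧
    IsStrongT1Cycle d Rn M ystar
      (fun n i => if u i ≠ 0 then ((n : ℤ) + 1) ^ (u i).toNat + ystar 1 i else ystar 1 i) := by
  change IsTierSeq d Rn (tierSeq u (ystar 1)) ∧ IsStrongT1Cycle d Rn M ystar (tierSeq u (ystar 1))
  have hy1 : ∀ i, 0 ≤ ystar 1 i := (hRn _ (hmem 1 le_rfl hM)).1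
  exact ⟨isTierSeq_tierSeq Rn hu hI1 hy1, hmem, fun n => intensity_pos (le_tierSeq n),
    m0, hm01, hm0M, tierLimits_tierSeq hRn hmem hu hm01 hm0M hcond⟩

/-- Structural condition (Theorem): the existence of `u ∈ ℤ^d_{≥0}` and `m0` satisfying the
inner-product inequalities yields a tier sequence along which `R` is a strong tier-1 cycle. -/
theorem stmt5 {d M : ℕ} (hd : 1 ≤ d) (hM : 1 ≤ M)
    (Rn : Finset ((Fin d → ℤ) × (Fin d → ℤ))) (hRn : IsRN d Rn)
    (ystar : ℕ → Fin d → ℤ) (hmem : IsCycleIn d Rn M ystar)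
    (u : Fin d → ℤ) (hu : ∀ i, 0 ≤ u i)
    (m0 : ℕ) (hm01 : 1 ≤ m0) (hm0M : m0 ≤ M)
    (hI1 : ∃ i, u i ≠ 0) (hI2 : ∃ i, u i = 0)
    (hcond : ∀ m, 1 ≤ m → m ≤ M → ∀ y y' : Fin d → ℤ, (y, y') ∈ Rn →
      (y, y') ≠ (ystar m, ystar (cyc M m)) →
      (∀ i, u i = 0 → y i ≤ ystar m i) →
      (∑ i, u i * y i) < ∑ i, u i * (ystar m i - ystar m0 i)) :
    IsTierSeq d Rn
      (fun n i => if u i ≠ 0 then ((n : ℤ) + 1) ^ (u i).toNat + ystar 1 i else ystar 1 i) ∧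
    IsStrongT1Cycle d Rn M ystar
      (fun n i => if u i ≠ 0 then ((n : ℤ) + 1) ^ (u i).toNat + ystar 1 i else ystar 1 i) :=
  stmt5_general hM Rn hRn ystar hmem u hu m0 hm01 hm0M hI1 hcond
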